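/- Fix reals a ≥ 0 and 0 ≤ α ≤ β. Then lim_{n→∞} sup_{x≥0} |T_{n,a}^{α,β}(t;x) − x|/(1+x²) = 0, where T_{n,a}^{α,β}(t;x) denotes the operator applied to the identity function t ↦ t. -/

import Mathlib

open MeasureTheory Filter

/-- Rising factorial `(n)_i = n(n+1)⋯(n+i−1)`, with `(n)_0 = 1`. -/
noncomputable def risingFac (n i : ℕ) : ℝ := ∏ j ∈ Finset.range i, ((n : ℝ) + j)

/-- `p_k(n,a) = Σ_{i=0}^{k} C(k,i)·(n)_i·a^{k−i}`. -/
noncomputable def pCoef (n : ℕ) (a : ℝ) (k : ℕ) : ℝ :=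
  ∑ i ∈ Finset.range (k + 1), (Nat.choose k i : ℝ) * risingFac n i * a ^ (k - i)

/-- Generalized Baskakov basis function `W_{n,k}^a(x)`. -/
noncomputable def W (n : ℕ) (a : ℝ) (k : ℕ) (x : ℝ) : ℝ :=
  Real.exp (-(a * x) / (1 + x)) * (pCoef n a k / (Nat.factorial k : ℝ)) * x ^ k /
    (1 + x) ^ (k + n)

/-- Stancu-type operator `L_{n,a}^{α,β}(f;x) = Σ_k W_{n,k}^a(x) f((k+α)/(n+β))`. -/
noncomputable def Lop (n : ℕ) (a α β : ℝ) (f : ℝ → ℝ) (x : ℝ) : ℝ :=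
  ∑' k : ℕ, W n a k x * f (((k : ℝ) + α) / ((n : ℝ) + β))

/-- Generalized Baskakov–Kantorovich–Stancu operator `T_{n,a}^{α,β}(f;x)`. -/
noncomputable def TKS (n : ℕ) (a α β : ℝ) (f : ℝ → ℝ) (x : ℝ) : ℝ :=
  ((n : ℝ) + β) *
    ∑' k : ℕ, W n a k x *
      ∫ t in (((k : ℝ) + α) / ((n : ℝ) + β))..(((k : ℝ) + α + 1) / ((n : ℝ) + β)), f t

/-! Put `t = x / (1 + x)`. Then `W_{n,k}^a(x) = e^{-at} (1 - t)^n · (p_k(n,a)/k!) t^k`, and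
`p_k(n,a)/k!` is the `k`-th coefficient of the Cauchy product of `Σ (n)_i t^i / i! = (1 - t)^{-n}`
and `Σ (at)^j / j! = e^{at}`, so `Σ_k W_{n,k}^a(x) = 1`. Pascal's rule gives
`p_{k+1}(n,a) = a p_k(n,a) + n p_k(n+1,a)`, i.e. `(k+1) W_{n,k+1} = n x W_{n+1,k} + (ax/(1+x)) W_{n,k}`,
hence `Σ_k k W_{n,k}^a(x) = n x + a x / (1 + x)`. Integrating `t` over the Stancu intervals then gives
`T(t; x) = (n x + a x / (1 + x) + α + 1/2) / (n + β)`, so `|T(t; x) - x| / (1 + x²) = O(1 / n)`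
uniformly in `x ≥ 0`. -/

lemma risingFac_eq_ascFactorial (n i : ℕ) : risingFac n i = (n.ascFactorial i : ℝ) := by
  simp [risingFac, Nat.ascFactorial_eq_prod_range]

lemma natCast_mul_risingFac_succ (n i : ℕ) :
    (n : ℝ) * risingFac (n + 1) i = risingFac n (i + 1) := by
  simp only [risingFac_eq_ascFactorial]
  exact_mod_cast (Nat.succ_ascFactorial n i).trans (Nat.ascFactorial_succ).symm

lemma hasSum_risingFac_mul_pow_div_factorial (n : ℕ) {t : ℝ} (ht : ‖t‖ < 1) :
    HasSum (fun i => risingFac n i * t ^ i / i.factorial) ((1 - t) ^ n)⁻¹ := by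
  rcases n with _ | m
  · convert hasSum_ite_eq 0 (1 : ℝ) using 2 with i
    · rcases i with _ | i <;> simp [risingFac_eq_ascFactorial, Nat.zero_ascFactorial]
    · simp
  · rw [inv_eq_one_div]
    refine (hasSum_choose_mul_geometric_of_norm_lt_one m ht).congr_fun fun i => ?_
    rw [risingFac_eq_ascFactorial, Nat.ascFactorial_eq_factorial_mul_choose,
      ← Nat.choose_symm_add, add_comm m i]
    push_cast
    field_simp

lemma pCoef_succ (n : ℕ) (a : ℝ) (k : ℕ) :
    pCoef n a (k + 1) = a * pCoef n a k + n * pCoef (n + 1) a k := by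
  have pascal := Finset.sum_choose_succ_mul (fun i j => risingFac n i * a ^ j) k
  simp only [pCoef, Finset.mul_sum]
  simp only [← mul_assoc] at pascal
  rw [pascal]
  congr 1 <;> refine Finset.sum_congr rfl fun i hi => ?_
  · rw [Nat.sub_add_comm (Finset.mem_range_succ_iff.mp hi), pow_succ]
    ring
  · rw [← natCast_mul_risingFac_succ]
    ring

lemma hasSum_pCoef_div_factorial_mul_pow (n : ℕ) (a : ℝ) {t : ℝ} (ht : ‖t‖ < 1) :
    HasSum (fun k => pCoef n a k / k.factorial * t ^ k) (((1 - t) ^ n)⁻¹ * Real.exp (a * t)) := by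
  have hf := hasSum_risingFac_mul_pow_div_factorial n ht
  have hg : HasSum (fun j => (a * t) ^ j / j.factorial) (Real.exp (a * t)) := by
    rw [Real.exp_eq_exp_ℝ]
    exact NormedSpace.expSeries_div_hasSum_exp (a * t)
  have cauchy := hasSum_sum_range_mul_of_summable_norm hf.summable.norm hg.summable.norm
  rw [hf.tsum_eq, hg.tsum_eq] at cauchy
  refine cauchy.congr_fun fun k => ?_
  rw [pCoef, Finset.sum_div, Finset.sum_mul]
  refine Finset.sum_congr rfl fun i hi => ?_
  have hik := Finset.mem_range_succ_iff.mp hi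
  rw [Nat.cast_choose ℝ hik, mul_pow, ← pow_mul_pow_sub t hik]
  field_simp

lemma hasSum_W (n : ℕ) (a : ℝ) {x : ℝ} (hx : 0 ≤ x) : HasSum (fun k => W n a k x) 1 := by
  have hx1 : 1 + x ≠ 0 := by positivity
  set t := x / (1 + x)
  have ht : ‖t‖ < 1 := by
    rw [Real.norm_of_nonneg (by positivity), div_lt_one (by positivity)]
    linarith
  have h1t : 1 - t = (1 + x)⁻¹ := by simp only [t]; field_simp; ring
  have hW : ∀ k,
      W n a k x = Real.exp (-(a * t)) * (1 - t) ^ n * (pCoef n a k / k.factorial * t ^ k) := by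
    intro k
    rw [h1t]
    simp only [W, t, neg_div, pow_add, inv_pow, div_pow]
    field_simp
  have hone : Real.exp (-(a * t)) * (1 - t) ^ n * (((1 - t) ^ n)⁻¹ * Real.exp (a * t)) = 1 := by
    rw [mul_assoc, mul_inv_cancel_left₀ (pow_ne_zero _ (by rw [h1t]; positivity)),
      ← Real.exp_add, neg_add_cancel, Real.exp_zero]
  simpa only [hW, hone] using (hasSum_pCoef_div_factorial_mul_pow n a ht).mul_left
    (Real.exp (-(a * t)) * (1 - t) ^ n)

lemma succ_mul_W_succ (n : ℕ) (a : ℝ) {x : ℝ} (hx : 0 ≤ x) (k : ℕ) :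
    (k + 1 : ℝ) * W n a (k + 1) x = n * x * W (n + 1) a k x + a * x / (1 + x) * W n a k x := by
  have hx1 : 1 + x ≠ 0 := by positivity
  simp only [W, pCoef_succ, Nat.factorial_succ, Nat.cast_mul, pow_add, pow_succ]
  push_cast
  field_simp
  ring

lemma hasSum_natCast_mul_W (n : ℕ) (a : ℝ) {x : ℝ} (hx : 0 ≤ x) :
    HasSum (fun k : ℕ => k * W n a k x) (n * x + a * x / (1 + x)) := by
  have h := ((hasSum_W (n + 1) a hx).mul_left (n * x)).add
    ((hasSum_W n a hx).mul_left (a * x / (1 + x)))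
  simp only [mul_one, ← succ_mul_W_succ n a hx] at h
  refine (hasSum_nat_add_iff' 1).mp ?_
  simpa using h

lemma TKS_id (n : ℕ) (a α β : ℝ) {x : ℝ} (hx : 0 ≤ x) :
    TKS n a α β (fun t => t) x = (n * x + a * x / (1 + x) + α + 1 / 2) / (n + β) := by
  have h : HasSum (fun k : ℕ => W n a k x *
      ∫ t in ((k : ℝ) + α) / ((n : ℝ) + β)..((k : ℝ) + α + 1) / ((n : ℝ) + β), t)
      ((n * x + a * x / (1 + x) + (α + 1 / 2) * 1) / ((n : ℝ) + β) ^ 2) :=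
    (((hasSum_natCast_mul_W n a hx).add ((hasSum_W n a hx).mul_left (α + 1 / 2))).div_const
      _).congr_fun fun k => by rw [integral_id]; generalize (n : ℝ) + β = c; ring
  rw [TKS, h.tsum_eq]
  rcases eq_or_ne ((n : ℝ) + β) 0 with hc | hc
  · -- both sides are `0`, the right one by the convention `y / 0 = 0`
    simp [hc]
  · field_simp
    ring

lemma abs_TKS_id_sub_le (n : ℕ) (a α β : ℝ) {x : ℝ} (hx : 0 ≤ x) (hnβ : 0 < (n : ℝ) + β) :
    |TKS n a α β (fun t => t) x - x| ≤ (|a| + |α| + |β| + 1) / (n + β) * (1 + x ^ 2) := by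
  have key : TKS n a α β (fun t => t) x - x = (a * x / (1 + x) + α + 1 / 2 - β * x) / (n + β) := by
    rw [TKS_id n a α β hx]
    field_simp
    ring
  have hax : |a * x / (1 + x)| ≤ |a| := by
    rw [mul_div_assoc, abs_mul, abs_of_nonneg (by positivity : 0 ≤ x / (1 + x))]
    exact mul_le_of_le_one_right (abs_nonneg a) ((div_le_one (by positivity)).mpr (by linarith))
  have hβx : |β * x| ≤ |β| * (1 + x ^ 2) := by
    rw [abs_mul, abs_of_nonneg hx]
    gcongr
    nlinarith [sq_nonneg (x - 1)]
  have hnum : |a * x / (1 + x) + α + 1 / 2 - β * x| ≤ (|a| + |α| + |β| + 1) * (1 + x ^ 2) :=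
    calc |a * x / (1 + x) + α + 1 / 2 - β * x|
        ≤ |a * x / (1 + x)| + |α| + |1 / 2| + |β * x| :=
          (abs_sub _ _).trans (by gcongr; exact abs_add_three _ _ _)
      _ ≤ (|a| + |α| + |β| + 1) * (1 + x ^ 2) := by
          rw [abs_of_pos (one_half_pos : (0 : ℝ) < 1 / 2)]
          nlinarith [abs_nonneg a, abs_nonneg α, sq_nonneg x]
  rw [key, abs_div, abs_of_pos hnβ, div_mul_eq_mul_div]
  exact div_le_div_of_nonneg_right hnum hnβ.le

theorem Top_weighted_convergence_id_general (a : ℝ) (α β : ℝ) :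
    Tendsto (fun n : ℕ =>
        ⨆ x : {x : ℝ // 0 ≤ x},
          |TKS n a α β (fun t => t) x.val - x.val| / (1 + x.val ^ 2))
      atTop (nhds 0) := by
  have hnβ : Tendsto (fun n : ℕ => (n : ℝ) + β) atTop atTop :=
    tendsto_atTop_add_const_right atTop β tendsto_natCast_atTop_atTop
  refine squeeze_zero' (g := fun n : ℕ => (|a| + |α| + |β| + 1) / (n + β))
    (Eventually.of_forall fun n => Real.iSup_nonneg fun x => by positivity) ?_
    (tendsto_const_nhds.div_atTop hnβ)
  filter_upwards [hnβ.eventually_gt_atTop 0] with n hn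
  exact Real.iSup_le (fun x => (div_le_iff₀ (by positivity)).mpr
    (abs_TKS_id_sub_le n a α β x.2 hn)) (by positivity)

theorem Top_weighted_convergence_id (a : ℝ) (ha : 0 ≤ a) (α β : ℝ) (hα : 0 ≤ α)
    (hαβ : α ≤ β) :
    Tendsto (fun n : ℕ =>
        ⨆ x : {x : ℝ // 0 ≤ x},
          |TKS n a α β (fun t => t) x.val - x.val| / (1 + x.val ^ 2))
      atTop (nhds 0) :=
  Top_weighted_convergence_id_general a α β
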